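/- Let f(w) = (1/2)⟨w, Aw⟩ − ⟨b, w⟩ + c be a quadratic function on ℝⁿ with A symmetric positive definite and unique minimizer x* = A⁻¹b. Let (xᵏ)ₖ≥₀ be a sequence in ℝⁿ such that for every k: if ∇f(xᵏ) = 0 then xᵏ⁺¹ = xᵏ, and if ∇f(xᵏ) ≠ 0 then f(xᵏ⁺¹) ≤ f(xᵏ − t*ₖ·∇f(xᵏ)) where t*ₖ := ‖∇f(xᵏ)‖²/⟨∇f(xᵏ), A∇f(xᵏ)⟩. Then the sequence (xᵏ) converges to x* (in the Euclidean norm). -/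

import Mathlib

/-!
Exact line search along `-g`, `g = A w - b`, lowers `f` by `‖g‖⁴ / (2 ⟪g, A g⟫)`, and
`⟪g, A g⟫ ≤ ‖A‖ ‖g‖²`, so every step lowers `f` by at least `‖g‖² / (2 ‖A‖)`. The values
`f (xᵏ)` decrease and are bounded below by `f x*`, so they converge; hence the decrements, and
with them the gradients `gᵏ`, tend to `0`, and `xᵏ = A⁻¹ (gᵏ + b) → A⁻¹ b`.
-/

open Matrix Filter Topology

lemma Matrix.IsHermitian.isSymm {ι : Type*} {A : Matrix ι ι ℝ} (hA : A.IsHermitian) :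
    A.IsSymm := by
  rw [IsHermitian, conjTranspose_eq_transpose_of_trivial] at hA
  exact hA

variable {ι : Type*} [Fintype ι]

lemma Matrix.IsSymm.dotProduct_mulVec_comm {A : Matrix ι ι ℝ} (hA : A.IsSymm) (v w : ι → ℝ) :
    v ⬝ᵥ A *ᵥ w = w ⬝ᵥ A *ᵥ v := by
  rw [← dotProduct_transpose_mulVec, hA.eq]

lemma dotProduct_mulVec_self_le_opNorm_mul [DecidableEq ι] (A : Matrix ι ι ℝ) (v : ι → ℝ) :
    v ⬝ᵥ A *ᵥ v ≤ ‖toEuclideanCLM (n := ι) (𝕜 := ℝ) A‖ * (v ⬝ᵥ v) := by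
  set u := WithLp.toLp 2 v
  have hu : ‖u‖ ^ 2 = v ⬝ᵥ v := by
    rw [← real_inner_self_eq_norm_sq, EuclideanSpace.inner_eq_star_dotProduct, star_trivial]
  calc v ⬝ᵥ A *ᵥ v = inner ℝ u (toEuclideanCLM (𝕜 := ℝ) A u) := (inner_toEuclideanCLM A u u).symm
    _ ≤ ‖u‖ * ‖toEuclideanCLM (𝕜 := ℝ) A u‖ := real_inner_le_norm _ _
    _ ≤ ‖u‖ * (‖toEuclideanCLM (n := ι) (𝕜 := ℝ) A‖ * ‖u‖) :=
        mul_le_mul_of_nonneg_left (ContinuousLinearMap.le_opNorm _ _) (norm_nonneg _)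
    _ = _ := by rw [← hu]; ring

lemma tendsto_zero_of_tendsto_dotProduct_self {α : Type*} {l : Filter α} {v : α → ι → ℝ}
    (h : Tendsto (fun a => v a ⬝ᵥ v a) l (𝓝 0)) : Tendsto v l (𝓝 0) := by
  have hnorm : ∀ a, ‖WithLp.toLp 2 (v a)‖ = √(v a ⬝ᵥ v a) := fun a => by
    rw [EuclideanSpace.norm_eq]; simp [dotProduct, sq]
  have : Tendsto (fun a => WithLp.toLp 2 (v a)) l (𝓝 0) := by
    rw [tendsto_zero_iff_norm_tendsto_zero]
    simpa [hnorm, Function.comp_def] using (Real.continuous_sqrt.tendsto 0).comp h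
  simpa [Function.comp_def] using ((PiLp.continuous_ofLp 2 _).tendsto 0).comp this

lemma tendsto_of_tendsto_mulVec_sub [DecidableEq ι] {A : Matrix ι ι ℝ} (hA : IsUnit A)
    (b : ι → ℝ) {α : Type*} {l : Filter α} {x : α → ι → ℝ}
    (h : Tendsto (fun a => A *ᵥ x a - b) l (𝓝 0)) : Tendsto x l (𝓝 (A⁻¹ *ᵥ b)) := by
  have hx : x = fun a => A⁻¹ *ᵥ ((A *ᵥ x a - b) + b) := by
    ext1 a
    rw [sub_add_cancel, mulVec_mulVec, nonsing_inv_mul _ ((isUnit_iff_isUnit_det A).1 hA),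
      one_mulVec]
  have hcont : Continuous fun v : ι → ℝ => A⁻¹ *ᵥ (v + b) :=
    continuous_const.matrix_mulVec (continuous_id.add continuous_const)
  have hlim := (hcont.tendsto 0).comp h
  rw [zero_add] at hlim
  rwa [hx]

lemma Antitone.tendsto_sub_succ {u : ℕ → ℝ} (hu : Antitone u) (hbdd : BddBelow (Set.range u)) :
    Tendsto (fun k => u k - u (k + 1)) atTop (𝓝 0) := by
  have hlim := tendsto_atTop_ciInf hu hbdd
  simpa using hlim.sub ((tendsto_add_atTop_iff_nat 1).2 hlim)

noncomputable def quadraticObjective (A : Matrix ι ι ℝ) (b : ι → ℝ) (c : ℝ) (w : ι → ℝ) : ℝ :=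
  1 / 2 * (w ⬝ᵥ A *ᵥ w) - b ⬝ᵥ w + c

noncomputable def steepestDescentStep (A : Matrix ι ι ℝ) (b w : ι → ℝ) : ι → ℝ :=
  let g := A *ᵥ w - b
  w - ((g ⬝ᵥ g) / (g ⬝ᵥ A *ᵥ g)) • g

section
variable {A : Matrix ι ι ℝ} (b : ι → ℝ) (c : ℝ)

lemma quadraticObjective_sub_smul (hA : A.IsSymm) (w s : ι → ℝ) (t : ℝ) :
    quadraticObjective A b c (w - t • s) =
      quadraticObjective A b c w - t * (s ⬝ᵥ (A *ᵥ w - b)) + t ^ 2 / 2 * (s ⬝ᵥ A *ᵥ s) := by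
  simp only [quadraticObjective, mulVec_sub, mulVec_smul, sub_dotProduct, dotProduct_sub,
    smul_dotProduct, dotProduct_smul, smul_eq_mul, hA.dotProduct_mulVec_comm s w,
    dotProduct_comm s b]
  ring

lemma quadraticObjective_steepestDescentStep (hA : A.IsSymm) (w : ι → ℝ) :
    let g := A *ᵥ w - b
    quadraticObjective A b c (steepestDescentStep A b w) =
      quadraticObjective A b c w - (g ⬝ᵥ g) ^ 2 / (2 * (g ⬝ᵥ A *ᵥ g)) := by
  intro g
  rw [steepestDescentStep, quadraticObjective_sub_smul b c hA, show A *ᵥ w - b = g from rfl]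
  rcases eq_or_ne (g ⬝ᵥ A *ᵥ g) 0 with h | h
  · simp [g, h]
  · field_simp
    ring

lemma quadraticObjective_le_of_mulVec_eq (hA : A.PosSemidef) {xstar : ι → ℝ}
    (hxstar : A *ᵥ xstar = b) (w : ι → ℝ) :
    quadraticObjective A b c xstar ≤ quadraticObjective A b c w := by
  have hq := quadraticObjective_sub_smul b c hA.isHermitian.isSymm xstar (xstar - w) 1
  rw [one_smul, sub_sub_cancel, hxstar, sub_self, dotProduct_zero] at hq
  have hnonneg := hA.dotProduct_mulVec_nonneg (xstar - w)
  rw [star_trivial] at hnonneg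
  linarith

lemma dotProduct_self_le_opNorm_mul_sq_div [DecidableEq ι] (hA : A.PosDef) (g : ι → ℝ) :
    g ⬝ᵥ g ≤ ‖toEuclideanCLM (n := ι) (𝕜 := ℝ) A‖ * ((g ⬝ᵥ g) ^ 2 / (g ⬝ᵥ A *ᵥ g)) := by
  rcases eq_or_ne g 0 with rfl | hg
  · simp
  have hpos := hA.dotProduct_mulVec_pos hg
  rw [star_trivial] at hpos
  rw [mul_div_assoc', le_div_iff₀ hpos]
  have hgg : 0 ≤ g ⬝ᵥ g := by simpa using dotProduct_star_self_nonneg g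
  nlinarith [mul_le_mul_of_nonneg_left (dotProduct_mulVec_self_le_opNorm_mul A g) hgg]

lemma quadraticObjective_steepestDescentStep_le (hA : A.PosSemidef) (w : ι → ℝ) :
    quadraticObjective A b c (steepestDescentStep A b w) ≤ quadraticObjective A b c w := by
  have hgAg := hA.dotProduct_mulVec_nonneg (A *ᵥ w - b)
  rw [star_trivial] at hgAg
  rw [quadraticObjective_steepestDescentStep b c hA.isHermitian.isSymm]
  exact sub_le_self _ (by positivity)

lemma dotProduct_self_le_opNorm_mul_sub_steepestDescentStep [DecidableEq ι] (hA : A.PosDef)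
    (w : ι → ℝ) :
    let g := A *ᵥ w - b
    g ⬝ᵥ g ≤ 2 * ‖toEuclideanCLM (n := ι) (𝕜 := ℝ) A‖ *
      (quadraticObjective A b c w - quadraticObjective A b c (steepestDescentStep A b w)) := by
  intro g
  rw [quadraticObjective_steepestDescentStep b c hA.isHermitian.isSymm, sub_sub_cancel]
  calc g ⬝ᵥ g ≤ ‖toEuclideanCLM (n := ι) (𝕜 := ℝ) A‖ * ((g ⬝ᵥ g) ^ 2 / (g ⬝ᵥ A *ᵥ g)) :=
        dotProduct_self_le_opNorm_mul_sq_div hA g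
    _ = _ := by ring

lemma tendsto_mulVec_sub_zero_of_le_steepestDescentStep [DecidableEq ι] (hA : A.PosDef)
    (x : ℕ → ι → ℝ)
    (hdesc : ∀ k, quadraticObjective A b c (x (k + 1)) ≤
      quadraticObjective A b c (steepestDescentStep A b (x k))) :
    Tendsto (fun k => A *ᵥ x k - b) atTop (𝓝 0) := by
  set q := quadraticObjective A b c
  have hanti : Antitone (q ∘ x) := antitone_nat_of_succ_le fun k =>
    (hdesc k).trans (quadraticObjective_steepestDescentStep_le b c hA.posSemidef (x k))
  have hbdd : BddBelow (Set.range (q ∘ x)) := by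
    refine ⟨q (A⁻¹ *ᵥ b), Set.forall_mem_range.2 fun k => ?_⟩
    refine quadraticObjective_le_of_mulVec_eq b c hA.posSemidef ?_ (x k)
    rw [mulVec_mulVec, mul_nonsing_inv _ hA.det_pos.ne'.isUnit, one_mulVec]
  have hlim :=
    (hanti.tendsto_sub_succ hbdd).const_mul (2 * ‖toEuclideanCLM (n := ι) (𝕜 := ℝ) A‖)
  rw [mul_zero] at hlim
  refine tendsto_zero_of_tendsto_dotProduct_self (squeeze_zero (fun k => ?_) (fun k => ?_) hlim)
  · simpa using dotProduct_star_self_nonneg (A *ᵥ x k - b)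
  · refine (dotProduct_self_le_opNorm_mul_sub_steepestDescentStep b c hA (x k)).trans ?_
    exact mul_le_mul_of_nonneg_left (sub_le_sub_left (hdesc k) _) (by positivity)

end

/-- Under the same descent assumptions as Statement 8, the sequence
`(xᵏ)` converges to the unique minimizer `x* = A⁻¹b`. -/
theorem stmt10 {n : ℕ} (A : Matrix (Fin n) (Fin n) ℝ) (hA : A.PosDef)
    (b : Fin n → ℝ) (c : ℝ) (f : (Fin n → ℝ) → ℝ)
    (hf : ∀ w, f w = (1/2) * (w ⬝ᵥ A.mulVec w) - b ⬝ᵥ w + c)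
    (xstar : Fin n → ℝ) (hxstar : xstar = A⁻¹.mulVec b)
    (x : ℕ → Fin n → ℝ)
    (hstep0 : ∀ k, A.mulVec (x k) - b = 0 → x (k + 1) = x k)
    (hstep : ∀ k, A.mulVec (x k) - b ≠ 0 →
      f (x (k + 1)) ≤
        f (x k - (((A.mulVec (x k) - b) ⬝ᵥ (A.mulVec (x k) - b)) /
            ((A.mulVec (x k) - b) ⬝ᵥ A.mulVec (A.mulVec (x k) - b))) • (A.mulVec (x k) - b))) :
    Filter.Tendsto x Filter.atTop (nhds xstar) := by
  obtain rfl : f = quadraticObjective A b c := funext hf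
  have hdesc : ∀ k, quadraticObjective A b c (x (k + 1)) ≤
      quadraticObjective A b c (steepestDescentStep A b (x k)) := fun k => by
    by_cases hg : A *ᵥ x k - b = 0
    · simp [steepestDescentStep, hg, hstep0 k hg]
    · exact hstep k hg
  rw [hxstar]
  exact tendsto_of_tendsto_mulVec_sub hA.isUnit b
    (tendsto_mulVec_sub_zero_of_le_steepestDescentStep b c hA x hdesc)
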